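/- arXiv:0905.3081 — 5 statements merged into one kernel-verified Lean document; each statement's English description precedes it below -/
import Mathlib

section
/- For every integer n ≥ 1, every word u of length n over {a,b}, and all integers f ≥ 0 and g ≥ 0, the number of binary trees with n+1 vertices with canopy u whose left branch has length f+1 and whose right branch has length g+1 equals the number of lattice paths η weakly below ω_u that have exactly f horizontal contacts with ω_u and exactly g trailing north steps. -/
/-- A binary tree: empty, or a root with a left and a right subtree. -/
inductive BinTree : Type
  | nil : BinTree
  | node : BinTree → BinTree → BinTree
  deriving DecidableEq

/-- Number of vertices of a binary tree. -/
def BinTree.size : BinTree → ℕ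
  | .nil => 0
  | .node l r => l.size + r.size + 1

/-- Length (number of vertices) of the left branch. -/
def BinTree.leftBranchLen : BinTree → ℕ
  | .nil => 0
  | .node l _ => l.leftBranchLen + 1

/-- Length (number of vertices) of the right branch. -/
def BinTree.rightBranchLen : BinTree → ℕ
  | .nil => 0
  | .node _ r => r.rightBranchLen + 1

/-- Word over {a,b} (a = `true`, b = `false`) reading the vertices in symmetric
(in-)order; a vertex contributes `true` iff it has a right child. -/
def BinTree.canopyFull : BinTree → List Bool
  | .nil => []
  | .node l r => l.canopyFull ++ (decide (r ≠ BinTree.nil)) :: r.canopyFull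

/-- The canopy of a binary tree with `n` vertices: the word `u₁ … u_{n-1}` over
{a = `true`, b = `false`} with `uᵢ = a` iff the `i`-th vertex in symmetric order
has a right child.  (The last vertex in symmetric order never has a right child,
so it is dropped.) -/
def BinTree.canopy (B : BinTree) : List Bool := B.canopyFull.dropLast

/-- A Catalan tableau of index `n`: a partition `λ₁ ≥ … ≥ λ_k` with `λ₁ = n - k`,
drawn right-justified inside the `k × (n-k)` rectangle (rows bottom to top, row `i`
having `lam i` cells, occupying columns `j` with `m - lam i ≤ j < m` where
`m = n - k`), filled with 0's (`false`) and 1's (`true`) such that every column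
contains exactly one 1 and no 0 has both a 1 below it in its column and a 1 to
its right in its row.  Entries outside the diagram are forced to `false`. -/
structure CatalanTableau (n : ℕ) where
  k : ℕ
  m : ℕ
  hk : 0 < k
  hkm : k + m = n
  lam : Fin k → ℕ
  lam_le : ∀ i, lam i ≤ m
  lam_first : lam ⟨0, hk⟩ = m
  lam_anti : ∀ i j : Fin k, i ≤ j → lam j ≤ lam i
  f : Fin k → Fin m → Bool
  f_outside : ∀ (i : Fin k) (j : Fin m), (j : ℕ) < m - lam i → f i j = false
  col_one : ∀ j : Fin m, ∃! i : Fin k, f i j = true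
  no_bad : ∀ (i : Fin k) (j : Fin m), m - lam i ≤ (j : ℕ) → f i j = false →
    ¬ ((∃ i' : Fin k, i' < i ∧ f i' j = true) ∧
       (∃ j' : Fin m, (j : ℕ) < (j' : ℕ) ∧ f i j' = true))

/-- The profile of a Catalan tableau: the NW border of its Ferrers diagram read
from the bottom-left corner of the rectangle to its top-right corner
(a = `true` for a north step, b = `false` for an east step), with the first
letter (always a north step) deleted. -/
def CatalanTableau.profile {n : ℕ} (T : CatalanTableau n) : List Bool :=
  ((List.finRange T.k).flatMap (fun i =>
    true :: List.replicate
      (T.lam i - (if h : (i : ℕ) + 1 < T.k then T.lam ⟨(i : ℕ) + 1, h⟩ else 0)) false)).tail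

/-- Number of 1's in the first (bottom) row of a Catalan tableau. -/
noncomputable def CatalanTableau.onesFirstRow {n : ℕ} (T : CatalanTableau n) : ℕ :=
  Nat.card {j : Fin T.m // T.f ⟨0, T.hk⟩ j = true}

/-- An entry is restricted if it is a 0 (in a cell of the diagram) lying above
some 1 in its column. -/
def CatalanTableau.Restricted {n : ℕ} (T : CatalanTableau n)
    (i : Fin T.k) (j : Fin T.m) : Prop :=
  T.m - T.lam i ≤ (j : ℕ) ∧ T.f i j = false ∧ ∃ i' : Fin T.k, i' < i ∧ T.f i' j = true

/-- Number of unrestricted rows (rows of the rectangle containing no restricted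
entry). -/
noncomputable def CatalanTableau.unrestrictedRows {n : ℕ} (T : CatalanTableau n) : ℕ :=
  Nat.card {i : Fin T.k // ∀ j : Fin T.m, ¬ T.Restricted i j}

/-- `weaklyBelow ω η`: the lattice paths coded by `ω`, `η` (a = `true` = north
step, b = `false` = east step, both starting at the origin) have the same
endpoints and `η` never passes strictly above `ω`. -/
def weaklyBelow (ω η : List Bool) : Prop :=
  η.length = ω.length ∧ η.count true = ω.count true ∧
    ∀ t : ℕ, (η.take t).count true ≤ (ω.take t).count true

/-- Heights at which the successive east steps of a path occur. -/
def eastHeightsAux : ℕ → List Bool → List ℕ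
  | _, [] => []
  | h, true :: w => eastHeightsAux (h + 1) w
  | h, false :: w => h :: eastHeightsAux h w

def eastHeights (w : List Bool) : List ℕ := eastHeightsAux 0 w

/-- Number of horizontal contacts of two paths: unit east edges traversed by
both paths. -/
def contacts (ω η : List Bool) : ℕ :=
  ((eastHeights ω).zip (eastHeights η)).countP (fun p => p.1 == p.2)

/-- Number of trailing north steps of a path. -/
def trailingNorth (w : List Bool) : ℕ := (w.reverse.takeWhile (· == true)).length

/-- Number of left edges, i.e. of vertices having a left child. -/
def BinTree.leftEdgeCount : BinTree → ℕ
  | .nil => 0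
  | .node l r => l.leftEdgeCount + r.leftEdgeCount + (if l = BinTree.nil then 0 else 1)

/-- Number of vertices having no right child. -/
def BinTree.noRightCount : BinTree → ℕ
  | .nil => 0
  | .node l r => l.noRightCount + r.noRightCount + (if r = BinTree.nil then 1 else 0)

/-- Symmetric-order traversal recording, for each vertex, whether it has a left
child, whether it has a right child, and its right height (the second argument
is the right height of the current root). -/
def BinTree.inorderAux : BinTree → ℕ → List (Bool × Bool × ℕ)
  | .nil, _ => []
  | .node l r, h =>
      BinTree.inorderAux l h ++
        (decide (l ≠ BinTree.nil), decide (r ≠ BinTree.nil), h) :: BinTree.inorderAux r (h + 1)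

def BinTree.inorder (B : BinTree) : List (Bool × Bool × ℕ) := B.inorderAux 0

/-- The sequence `ρ₁, …, ρ_m`: right heights of the parents of the left edges,
the left edges being ordered by their parents in symmetric order. -/
def BinTree.rhoList (B : BinTree) : List ℕ :=
  (B.inorder.filter (fun v => v.1)).map (fun v => v.2.2)

def hsAux : List (Bool × Bool × ℕ) → ℕ → List ℕ
  | [], _ => []
  | v :: rest, c => if v.2.1 then hsAux rest (c + 1) else c :: hsAux rest c

/-- The sequence `h₁, …, h_m`: for each vertex with no right child (in symmetric
order, excluding the last vertex in symmetric order), the number of vertices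
preceding it in symmetric order that have a right child. -/
def BinTree.hList (B : BinTree) : List ℕ := (hsAux B.inorder 0).dropLast

/-- Leaves of the completion `γ(B)` in symmetric order, each recorded as `true`
if it is a left child of its parent and `false` if it is a right child; the
boolean argument records whether the current subtree sits as a left child. -/
def BinTree.gammaLeavesAux : BinTree → Bool → List Bool
  | .nil, isLeft => [isLeft]
  | .node l r, _ => BinTree.gammaLeavesAux l true ++ BinTree.gammaLeavesAux r false

/-- The word of the leaves of the complete binary tree `γ(B)` in symmetric order
(a = `true` for a left child, b = `false` for a right child). -/
def BinTree.leafWord : BinTree → List Bool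
  | .nil => []
  | .node l r => BinTree.gammaLeavesAux l true ++ BinTree.gammaLeavesAux r false

/-
Reading `u` from the right, we build a bijection between the trees with canopy `u` and the paths
weakly below `ω_u` which turns the lengths of the left and right branches into the number of
contacts plus one and the number of trailing north steps plus one. Appending `a` to `u` adds a
last vertex to the right branch of the tree and a final north step to the path. Appending `b`
inserts a vertex at a depth `j` of the right branch and an east step before the last `j` north
steps of the path; the admissible `j` are the same on both sides because the right branch is one
longer than the run of trailing north steps, and `j = 0` is exactly the choice that lengthens
the left branch and creates a contact.
-/

lemma List.dropLast_append_cons_concat {α : Type*} (w₁ w₂ : List α) (x y : α) :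
    (w₁ ++ x :: (w₂ ++ [y])).dropLast = w₁ ++ x :: w₂ := by
  rw [List.dropLast_append_cons, ← List.cons_append, List.dropLast_concat]

namespace BinTree

/-- Inserts a new vertex at depth `j` of the right branch, the subtree previously hanging there
becoming its left subtree; beyond the end of the branch it adds a leaf. -/
def insertRight : BinTree → ℕ → BinTree
  | B, 0 => node B nil
  | nil, _ + 1 => node nil nil
  | node l r, j + 1 => node l (insertRight r j)

def popRight : BinTree → BinTree
  | nil => nil
  | node l nil => l
  | node l (node rl rr) => node l (popRight (node rl rr))

lemma canopyFull_eq_canopy_append {B : BinTree} (hB : B ≠ nil) :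
    B.canopyFull = B.canopy ++ [false] := by
  induction B with
  | nil => exact absurd rfl hB
  | node l r _ ihr =>
    cases r with
    | nil => simp [canopy, canopyFull]
    | node rl rr =>
      rw [canopy, canopyFull, ihr (by simp), List.dropLast_append_cons_concat]
      simp

lemma canopy_node_nil (l : BinTree) : (node l nil).canopy = l.canopyFull := by
  simp [canopy, canopyFull]

lemma canopy_node {r : BinTree} (l : BinTree) (hr : r ≠ nil) :
    (node l r).canopy = l.canopyFull ++ true :: r.canopy := by
  rw [canopy, canopyFull, canopyFull_eq_canopy_append hr, List.dropLast_append_cons_concat]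
  simp [hr]

@[simp]
lemma size_insertRight (B : BinTree) (j : ℕ) : (B.insertRight j).size = B.size + 1 := by
  induction B generalizing j with
  | nil => cases j <;> rfl
  | node l r _ ihr =>
    cases j
    · rfl
    · simp only [insertRight, size, ihr]
      omega

lemma insertRight_ne_nil (B : BinTree) (j : ℕ) : B.insertRight j ≠ nil := by
  cases B <;> cases j <;> simp [insertRight]

@[simp]
lemma popRight_insertRight (B : BinTree) (j : ℕ) : (B.insertRight j).popRight = B := by
  induction B generalizing j with
  | nil => cases j <;> rfl
  | node l r _ ihr =>
    cases j with
    | zero => rfl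
    | succ j =>
      obtain ⟨rl, rr, h⟩ : ∃ rl rr, r.insertRight j = node rl rr := by
        cases hr : r.insertRight j
        · exact absurd hr (insertRight_ne_nil r j)
        · exact ⟨_, _, rfl⟩
      have ih := ihr j
      rw [h] at ih
      simp [insertRight, popRight, h, ih]

lemma insertRight_popRight {B : BinTree} (hB : B ≠ nil) :
    B.popRight.insertRight (B.rightBranchLen - 1) = B := by
  induction B with
  | nil => exact absurd rfl hB
  | node l r _ ihr =>
    cases r with
    | nil => simp [popRight, insertRight, rightBranchLen]
    | node rl rr =>
      have ih := ihr (by simp)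
      simp only [rightBranchLen, Nat.add_sub_cancel] at ih ⊢
      simp [popRight, insertRight, ih]

lemma rightBranchLen_insertRight {B : BinTree} {j : ℕ} (h : j ≤ B.rightBranchLen) :
    (B.insertRight j).rightBranchLen = j + 1 := by
  induction B generalizing j with
  | nil =>
    obtain rfl : j = 0 := by simpa [rightBranchLen] using h
    rfl
  | node l r _ ihr =>
    cases j with
    | zero => rfl
    | succ j => simp [insertRight, rightBranchLen, ihr (by simpa [rightBranchLen] using h)]

lemma leftBranchLen_insertRight {B : BinTree} {j : ℕ} (h : j ≤ B.rightBranchLen) :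
    (B.insertRight j).leftBranchLen = B.leftBranchLen + if j = 0 then 1 else 0 := by
  cases B <;> cases j <;> simp_all [insertRight, leftBranchLen, rightBranchLen]

lemma canopyFull_insertRight {B : BinTree} (hB : B ≠ nil) {j : ℕ} (h : j ≤ B.rightBranchLen) :
    (B.insertRight j).canopyFull = B.canopy ++ [decide (j = B.rightBranchLen), false] := by
  induction B generalizing j with
  | nil => exact absurd rfl hB
  | node l r _ ihr =>
    cases j with
    | zero =>
      rw [insertRight, canopyFull, canopyFull_eq_canopy_append hB]
      simp [rightBranchLen, canopyFull.eq_1]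
    | succ j =>
      rcases eq_or_ne r nil with rfl | hr
      · obtain rfl : j = 0 := by simpa [rightBranchLen] using h
        simp [insertRight, canopy_node_nil, canopyFull, rightBranchLen]
      · have ih := ihr hr (j := j) (by simpa [rightBranchLen] using h)
        simp [insertRight, canopyFull, canopy_node l hr, ih, insertRight_ne_nil, rightBranchLen]

lemma canopy_insertRight {B : BinTree} (hB : B ≠ nil) {j : ℕ} (h : j ≤ B.rightBranchLen) :
    (B.insertRight j).canopy = B.canopy ++ [decide (j = B.rightBranchLen)] := by
  rw [canopy, canopyFull_insertRight hB h, ← List.singleton_append, ← List.append_assoc,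
    List.dropLast_concat]

lemma rightBranchLen_sub_one_le_popRight (B : BinTree) :
    B.rightBranchLen - 1 ≤ B.popRight.rightBranchLen := by
  induction B with
  | nil => rfl
  | node l r _ ihr =>
    cases r with
    | nil => simp [rightBranchLen]
    | node rl rr => simp only [popRight, rightBranchLen] at ihr ⊢; omega

lemma canopy_eq_canopy_popRight_append {B : BinTree} (hB : B.popRight ≠ nil) :
    B.canopy =
      B.popRight.canopy ++ [decide (B.rightBranchLen - 1 = B.popRight.rightBranchLen)] := by
  have hB' : B ≠ nil := by rintro rfl; exact hB rfl
  have h := canopy_insertRight hB (rightBranchLen_sub_one_le_popRight B)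
  rwa [insertRight_popRight hB'] at h

lemma size_popRight (B : BinTree) : B.popRight.size = B.size - 1 := by
  have : B ≠ nil → B.popRight.size = B.size - 1 := fun hB => by
    conv_rhs => rw [← insertRight_popRight hB]
    simp
  cases B
  · rfl
  · exact this (by simp)

lemma eq_nil_of_size_eq_zero {B : BinTree} (h : B.size = 0) : B = nil := by
  cases B
  · rfl
  · simp [size] at h

lemma eq_node_nil_nil_of_size_eq_one {B : BinTree} (h : B.size = 1) : B = node nil nil := by
  cases B with
  | nil => simp [size] at h
  | node l r =>
    simp only [size] at h
    rw [eq_nil_of_size_eq_zero (by omega : l.size = 0),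
      eq_nil_of_size_eq_zero (by omega : r.size = 0)]

lemma rightBranchLen_ne_zero {B : BinTree} (hB : B ≠ nil) : B.rightBranchLen ≠ 0 := by
  cases B
  · exact absurd rfl hB
  · simp [rightBranchLen]

abbrev WithCanopy (u : List Bool) : Type :=
  {B : BinTree // B.size = u.length + 1 ∧ B.canopy = u}

lemma ne_nil_of_withCanopy {u : List Bool} (B : WithCanopy u) : B.1 ≠ nil := by
  intro h
  simpa [h, size] using B.2.1

lemma popRight_ne_nil_of_withCanopy {u : List Bool} {x : Bool} (B : WithCanopy (u ++ [x])) :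
    B.1.popRight ≠ nil := by
  intro h
  have := size_popRight B.1
  simp [h, size, B.2.1] at this

lemma canopy_popRight_eq_and_decide_eq {u : List Bool} {x : Bool} (B : WithCanopy (u ++ [x])) :
    B.1.popRight.canopy = u ∧
      decide (B.1.rightBranchLen - 1 = B.1.popRight.rightBranchLen) = x := by
  have h := canopy_eq_canopy_popRight_append (popRight_ne_nil_of_withCanopy B)
  rw [B.2.2] at h
  obtain ⟨hu, hx⟩ := List.append_inj' h rfl
  exact ⟨hu.symm, by simpa using hx.symm⟩

lemma popRight_mem_withCanopy {u : List Bool} {x : Bool} (B : WithCanopy (u ++ [x])) :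
    B.1.popRight.size = u.length + 1 ∧ B.1.popRight.canopy = u :=
  ⟨by simp [size_popRight, B.2.1], (canopy_popRight_eq_and_decide_eq B).1⟩

def withCanopyAppendTrueEquiv (u : List Bool) : WithCanopy u ≃ WithCanopy (u ++ [true]) where
  toFun B := ⟨B.1.insertRight B.1.rightBranchLen, by
    simp [B.2.1, canopy_insertRight (ne_nil_of_withCanopy B) le_rfl, B.2.2]⟩
  invFun B := ⟨B.1.popRight, popRight_mem_withCanopy B⟩
  left_inv B := Subtype.ext (popRight_insertRight _ _)
  right_inv B := by
    have h := of_decide_eq_true (canopy_popRight_eq_and_decide_eq B).2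
    apply Subtype.ext
    change B.1.popRight.insertRight B.1.popRight.rightBranchLen = B.1
    rw [← h, insertRight_popRight (ne_nil_of_withCanopy B)]

def withCanopyAppendFalseEquiv (u : List Bool) :
    {p : WithCanopy u × ℕ // p.2 < p.1.1.rightBranchLen} ≃ WithCanopy (u ++ [false]) where
  toFun p := ⟨p.1.1.1.insertRight p.1.2, by
    simp [p.1.1.2.1, canopy_insertRight (ne_nil_of_withCanopy p.1.1) p.2.le, p.1.1.2.2, p.2.ne]⟩
  invFun B := ⟨(⟨B.1.popRight, popRight_mem_withCanopy B⟩, B.1.rightBranchLen - 1),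
    (rightBranchLen_sub_one_le_popRight _).lt_of_ne
      (of_decide_eq_false (canopy_popRight_eq_and_decide_eq B).2)⟩
  left_inv p := by
    obtain ⟨⟨B, j⟩, hj⟩ := p
    ext
    · simp
    · simp [rightBranchLen_insertRight hj.le]
  right_inv B := Subtype.ext (insertRight_popRight (ne_nil_of_withCanopy B))

@[simp]
lemma leftBranchLen_withCanopyAppendTrueEquiv {u : List Bool} (B : WithCanopy u) :
    (withCanopyAppendTrueEquiv u B).1.leftBranchLen = B.1.leftBranchLen := by
  simp [withCanopyAppendTrueEquiv, leftBranchLen_insertRight le_rfl,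
    rightBranchLen_ne_zero (ne_nil_of_withCanopy B)]

@[simp]
lemma rightBranchLen_withCanopyAppendTrueEquiv {u : List Bool} (B : WithCanopy u) :
    (withCanopyAppendTrueEquiv u B).1.rightBranchLen = B.1.rightBranchLen + 1 :=
  rightBranchLen_insertRight le_rfl

@[simp]
lemma leftBranchLen_withCanopyAppendFalseEquiv {u : List Bool}
    (p : {p : WithCanopy u × ℕ // p.2 < p.1.1.rightBranchLen}) :
    (withCanopyAppendFalseEquiv u p).1.leftBranchLen =
      p.1.1.1.leftBranchLen + if p.1.2 = 0 then 1 else 0 :=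
  leftBranchLen_insertRight p.2.le

@[simp]
lemma rightBranchLen_withCanopyAppendFalseEquiv {u : List Bool}
    (p : {p : WithCanopy u × ℕ // p.2 < p.1.1.rightBranchLen}) :
    (withCanopyAppendFalseEquiv u p).1.rightBranchLen = p.1.2 + 1 :=
  rightBranchLen_insertRight p.2.le

end BinTree

section Paths

open List

lemma trailingNorth_append_singleton (w : List Bool) (b : Bool) :
    trailingNorth (w ++ [b]) = if b then trailingNorth w + 1 else 0 := by
  cases b <;> simp [trailingNorth]

lemma trailingNorth_append_replicate (w : List Bool) (g : ℕ) :
    trailingNorth (w ++ replicate g true) = trailingNorth w + g := by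
  induction g with
  | zero => simp
  | succ g ih =>
    rw [replicate_succ', ← append_assoc, trailingNorth_append_singleton, if_pos rfl, ih]
    omega

lemma trailingNorth_append_false_replicate (ζ : List Bool) (g : ℕ) :
    trailingNorth (ζ ++ false :: replicate g true) = g := by
  rw [← singleton_append, ← append_assoc, trailingNorth_append_replicate,
    trailingNorth_append_singleton, if_neg Bool.false_ne_true, zero_add]

lemma exists_eq_append_replicate_of_le_trailingNorth {w : List Bool} {g : ℕ}
    (h : g ≤ trailingNorth w) : ∃ ζ, w = ζ ++ replicate g true := by
  induction w using reverseRecOn generalizing g with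
  | nil => exact ⟨[], by simp_all [trailingNorth]⟩
  | append_singleton v b ih =>
    rw [trailingNorth_append_singleton] at h
    cases g with
    | zero => exact ⟨v ++ [b], by simp⟩
    | succ g =>
      cases b
      · simp at h
      · obtain ⟨ζ, rfl⟩ := ih (g := g) (by simpa using h)
        exact ⟨ζ, by simp [replicate_succ']⟩

lemma exists_eq_append_false_replicate {w : List Bool} (h : false ∈ w) :
    ∃ ζ, w = ζ ++ false :: replicate (trailingNorth w) true := by
  induction w using reverseRecOn with
  | nil => simp at h
  | append_singleton v b ih =>
    rw [trailingNorth_append_singleton]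
    cases b
    · exact ⟨v, by simp⟩
    · obtain ⟨ζ, hζ⟩ := ih (by simpa using h)
      exact ⟨ζ, by rw [if_pos rfl, replicate_succ']; nth_rw 1 [hζ]; simp⟩

lemma count_take_le_of_forall_mem_drop {ω η : List Bool} {t : ℕ}
    (hlen : η.length = ω.length) (hcount : η.count true = ω.count true)
    (hdrop : ∀ x ∈ η.drop t, x = true) :
    (η.take t).count true ≤ (ω.take t).count true := by
  have hη : (η.drop t).count true = (η.drop t).length :=
    count_eq_length.mpr fun x hx => (hdrop x hx).symm
  have hω : (ω.drop t).count true ≤ (ω.drop t).length := count_le_length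
  rw [← take_append_drop t η, ← take_append_drop t ω, count_append, count_append] at hcount
  simp only [length_drop] at hη hω
  omega

lemma weaklyBelow_iff_of_forall_mem_drop {ω η : List Bool} {k : ℕ}
    (hdrop : ∀ x ∈ η.drop k, x = true) :
    weaklyBelow ω η ↔ η.length = ω.length ∧ η.count true = ω.count true ∧
      ∀ t ≤ k, (η.take t).count true ≤ (ω.take t).count true := by
  refine ⟨fun ⟨hlen, hcount, hpre⟩ => ⟨hlen, hcount, fun t _ => hpre t⟩,
    fun ⟨hlen, hcount, hpre⟩ => ⟨hlen, hcount, fun t => ?_⟩⟩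
  rcases le_or_gt t k with ht | ht
  · exact hpre t ht
  · exact count_take_le_of_forall_mem_drop hlen hcount
      fun x hx => hdrop x (drop_subset_drop_left η ht.le hx)

lemma weaklyBelow.count_false {ω η : List Bool} (h : weaklyBelow ω η) :
    η.count false = ω.count false := by
  have hη := count_true_add_count_false η
  have hω := count_true_add_count_false ω
  have := h.1; have := h.2.1
  omega

lemma weaklyBelow_append_true_iff {u η : List Bool} :
    weaklyBelow (u ++ [true]) (η ++ [true]) ↔ weaklyBelow u η := by
  rw [weaklyBelow_iff_of_forall_mem_drop (k := η.length) (by simp),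
    weaklyBelow_iff_of_forall_mem_drop (k := η.length) (by simp)]
  simp only [length_append, length_singleton, count_append, Nat.add_right_cancel_iff]
  refine and_congr_right fun hlen => and_congr_right fun _ => forall₂_congr fun t ht => ?_
  rw [take_append_of_le_length ht, take_append_of_le_length (hlen ▸ ht)]

lemma exists_eq_append_true_of_weaklyBelow {u η : List Bool}
    (h : weaklyBelow (u ++ [true]) η) : ∃ ζ, η = ζ ++ [true] := by
  obtain ⟨hlen, hcount, hpre⟩ := h
  rcases eq_nil_or_concat' η with rfl | ⟨ζ, b, rfl⟩
  · simp at hlen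
  cases b
  · have hζ : ζ.length = u.length := by simpa using hlen
    have := hpre u.length
    rw [← hζ, take_left, hζ, take_left] at this
    rw [count_append, count_append, show count true [false] = 0 from rfl,
      show count true [true] = 1 from rfl] at hcount
    omega
  · exact ⟨ζ, rfl⟩

lemma weaklyBelow_append_false_iff {u ζ : List Bool} {g : ℕ} :
    weaklyBelow (u ++ [false]) (ζ ++ false :: replicate g true) ↔
      weaklyBelow u (ζ ++ replicate g true) := by
  rw [weaklyBelow_iff_of_forall_mem_drop (k := ζ.length + 1) (by simp),
    weaklyBelow_iff_of_forall_mem_drop (k := ζ.length) (by simp)]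
  simp only [length_append, length_cons, length_replicate, length_nil, count_append,
    count_cons_of_ne Bool.false_ne_true, count_replicate_self, count_nil]
  constructor
  · rintro ⟨hlen, hcount, hpre⟩
    refine ⟨by omega, by omega, fun t ht => ?_⟩
    have := hpre t (by omega)
    simpa only [take_append_of_le_length ht,
      take_append_of_le_length (show t ≤ u.length by omega)] using this
  · rintro ⟨hlen, hcount, hpre⟩
    refine ⟨by omega, by omega, fun t ht => ?_⟩
    rcases Nat.lt_or_eq_of_le ht with ht | rfl
    · have := hpre t (by omega)
      simpa only [take_append_of_le_length (show t ≤ ζ.length by omega),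
        take_append_of_le_length (show t ≤ u.length by omega)] using this
    · have hζ := hpre ζ.length le_rfl
      have hmono :=
        (take_prefix_take_left (l := u ++ [false]) (Nat.le_add_right ζ.length 1)).count_le true
      simp only [take_append_of_le_length (le_refl ζ.length),
        take_append_of_le_length (show ζ.length ≤ u.length by omega), take_length] at hζ hmono
      have hlast : take (ζ.length + 1) (ζ ++ false :: replicate g true) = ζ ++ [false] := by
        simp [take_append]
      rw [hlast, count_append, show count true [false] = 0 from rfl]
      omega

lemma eastHeightsAux_append (c : ℕ) (w₁ w₂ : List Bool) :
    eastHeightsAux c (w₁ ++ w₂) =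
      eastHeightsAux c w₁ ++ eastHeightsAux (c + w₁.count true) w₂ := by
  induction w₁ generalizing c with
  | nil => simp [eastHeightsAux]
  | cons b w ih => cases b <;> simp [eastHeightsAux, ih, Nat.add_assoc, Nat.add_comm 1]

lemma length_eastHeightsAux (c : ℕ) (w : List Bool) :
    (eastHeightsAux c w).length = w.count false := by
  induction w generalizing c with
  | nil => rfl
  | cons b w ih => cases b <;> simp [eastHeightsAux, ih]

lemma eastHeightsAux_replicate_true (c g : ℕ) : eastHeightsAux c (replicate g true) = [] := by
  induction g generalizing c with
  | zero => rfl
  | succ g ih => simp [replicate_succ, eastHeightsAux, ih]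

lemma contacts_append_true (u η : List Bool) :
    contacts (u ++ [true]) (η ++ [true]) = contacts u η := by
  simp [contacts, eastHeights, eastHeightsAux_append, eastHeightsAux]

lemma contacts_append_false {u ζ : List Bool} (g : ℕ) (h : ζ.count false = u.count false) :
    contacts (u ++ [false]) (ζ ++ false :: replicate g true) =
      contacts u (ζ ++ replicate g true) + if u.count true = ζ.count true then 1 else 0 := by
  simp only [contacts, eastHeights, eastHeightsAux_append, eastHeightsAux,
    eastHeightsAux_replicate_true, append_nil]
  rw [zip_append (by rw [length_eastHeightsAux, length_eastHeightsAux, h]), countP_append]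
  simp

lemma List.insertIdx_length_append {α : Type*} (ζ l : List α) (a : α) :
    (ζ ++ l).insertIdx ζ.length a = ζ ++ a :: l := by
  induction ζ <;> simp_all

lemma List.eraseIdx_length_append {α : Type*} (ζ l : List α) (a : α) :
    (ζ ++ a :: l).eraseIdx ζ.length = ζ ++ l := by
  simp [eraseIdx_append_of_length_le]

def insertEast (w : List Bool) (j : ℕ) : List Bool := w.insertIdx (w.length - j) false

def eraseEast (w : List Bool) (j : ℕ) : List Bool := w.eraseIdx (w.length - j - 1)

lemma insertEast_append_replicate (ζ : List Bool) (g : ℕ) :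
    insertEast (ζ ++ replicate g true) g = ζ ++ false :: replicate g true := by
  rw [insertEast, show (ζ ++ replicate g true).length - g = ζ.length by simp,
    insertIdx_length_append]

lemma eraseEast_append_false_replicate (ζ : List Bool) (g : ℕ) :
    eraseEast (ζ ++ false :: replicate g true) g = ζ ++ replicate g true := by
  rw [eraseEast, show (ζ ++ false :: replicate g true).length - g - 1 = ζ.length by
      simp only [length_append, length_cons, length_replicate]; omega,
    eraseIdx_length_append]

abbrev PathsBelow (u : List Bool) : Type := {η : List Bool // weaklyBelow u η}

def pathsBelowAppendTrueEquiv (u : List Bool) : PathsBelow u ≃ PathsBelow (u ++ [true]) where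
  toFun η := ⟨η.1 ++ [true], weaklyBelow_append_true_iff.mpr η.2⟩
  invFun η := ⟨η.1.dropLast, by
    obtain ⟨ζ, hζ⟩ := exists_eq_append_true_of_weaklyBelow η.2
    simpa [hζ, weaklyBelow_append_true_iff] using η.2⟩
  left_inv η := Subtype.ext (dropLast_concat ..)
  right_inv η := by
    obtain ⟨ζ, hζ⟩ := exists_eq_append_true_of_weaklyBelow η.2
    exact Subtype.ext (by simp [hζ])

lemma eq_append_false_replicate_of_weaklyBelow {u η : List Bool}
    (h : weaklyBelow (u ++ [false]) η) :
    ∃ ζ, η = ζ ++ false :: replicate (trailingNorth η) true := by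
  refine exists_eq_append_false_replicate (count_pos_iff.mp ?_)
  simp [h.count_false]

lemma insertEast_eq_of_le_trailingNorth {η : List Bool} {j : ℕ} (h : j ≤ trailingNorth η) :
    ∃ ζ, η = ζ ++ replicate j true ∧ insertEast η j = ζ ++ false :: replicate j true := by
  obtain ⟨ζ, rfl⟩ := exists_eq_append_replicate_of_le_trailingNorth h
  exact ⟨ζ, rfl, insertEast_append_replicate ζ j⟩

lemma eraseEast_eq_of_weaklyBelow {u η : List Bool} (h : weaklyBelow (u ++ [false]) η) :
    ∃ ζ, η = ζ ++ false :: replicate (trailingNorth η) true ∧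
      eraseEast η (trailingNorth η) = ζ ++ replicate (trailingNorth η) true := by
  obtain ⟨ζ, hζ⟩ := eq_append_false_replicate_of_weaklyBelow h
  refine ⟨ζ, hζ, ?_⟩
  generalize trailingNorth η = g at hζ ⊢
  rw [hζ, eraseEast_append_false_replicate]

lemma trailingNorth_insertEast {η : List Bool} {j : ℕ} (h : j ≤ trailingNorth η) :
    trailingNorth (insertEast η j) = j := by
  obtain ⟨ζ, -, hins⟩ := insertEast_eq_of_le_trailingNorth h
  rw [hins, trailingNorth_append_false_replicate]

lemma contacts_insertEast {u η : List Bool} {j : ℕ} (hη : weaklyBelow u η)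
    (h : j ≤ trailingNorth η) :
    contacts (u ++ [false]) (insertEast η j) = contacts u η + if j = 0 then 1 else 0 := by
  obtain ⟨ζ, rfl, hins⟩ := insertEast_eq_of_le_trailingNorth h
  have hcount := hη.2.1
  have hfalse := hη.count_false
  simp only [count_append, count_replicate_self, count_replicate, Bool.true_eq_false, beq_iff_eq,
    if_false, add_zero] at hcount hfalse
  rw [hins, contacts_append_false j hfalse]
  congr 1
  split_ifs <;> omega

def pathsBelowAppendFalseEquiv (u : List Bool) :
    {p : PathsBelow u × ℕ // p.2 ≤ trailingNorth p.1.1} ≃ PathsBelow (u ++ [false]) where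
  toFun p := ⟨insertEast p.1.1.1 p.1.2, by
    obtain ⟨ζ, hζ, hins⟩ := insertEast_eq_of_le_trailingNorth p.2
    rw [hins, weaklyBelow_append_false_iff, ← hζ]
    exact p.1.1.2⟩
  invFun η := ⟨(⟨eraseEast η.1 (trailingNorth η.1), by
      obtain ⟨ζ, hζ, herase⟩ := eraseEast_eq_of_weaklyBelow η.2
      rw [herase, ← weaklyBelow_append_false_iff, ← hζ]
      exact η.2⟩, trailingNorth η.1), by
    obtain ⟨ζ, -, herase⟩ := eraseEast_eq_of_weaklyBelow η.2
    simp only [herase, trailingNorth_append_replicate, Nat.le_add_left]⟩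
  left_inv p := by
    obtain ⟨ζ, hζ, hins⟩ := insertEast_eq_of_le_trailingNorth p.2
    refine Subtype.ext (Prod.ext (Subtype.ext ?_) ?_)
    · change eraseEast (insertEast p.1.1.1 p.1.2) (trailingNorth (insertEast p.1.1.1 p.1.2)) = _
      rw [hins, trailingNorth_append_false_replicate, eraseEast_append_false_replicate, hζ]
    · exact trailingNorth_insertEast p.2
  right_inv η := by
    obtain ⟨ζ, hζ, herase⟩ := eraseEast_eq_of_weaklyBelow η.2
    refine Subtype.ext ?_
    simp only [herase, insertEast_append_replicate, ← hζ]

@[simp]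
lemma contacts_pathsBelowAppendTrueEquiv {u : List Bool} (η : PathsBelow u) :
    contacts (u ++ [true]) (pathsBelowAppendTrueEquiv u η).1 = contacts u η.1 :=
  contacts_append_true u η.1

@[simp]
lemma trailingNorth_pathsBelowAppendTrueEquiv {u : List Bool} (η : PathsBelow u) :
    trailingNorth (pathsBelowAppendTrueEquiv u η).1 = trailingNorth η.1 + 1 :=
  trailingNorth_append_singleton η.1 true

@[simp]
lemma contacts_pathsBelowAppendFalseEquiv {u : List Bool}
    (p : {p : PathsBelow u × ℕ // p.2 ≤ trailingNorth p.1.1}) :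
    contacts (u ++ [false]) (pathsBelowAppendFalseEquiv u p).1 =
      contacts u p.1.1.1 + if p.1.2 = 0 then 1 else 0 :=
  contacts_insertEast p.1.1.2 p.2

@[simp]
lemma trailingNorth_pathsBelowAppendFalseEquiv {u : List Bool}
    (p : {p : PathsBelow u × ℕ // p.2 ≤ trailingNorth p.1.1}) :
    trailingNorth (pathsBelowAppendFalseEquiv u p).1 = p.1.2 :=
  trailingNorth_insertEast p.2

end Paths

open BinTree in
def withCanopyNilEquiv : WithCanopy [] ≃ PathsBelow [] where
  toFun _ := ⟨[], by simp [weaklyBelow]⟩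
  invFun _ := ⟨node nil nil, rfl, rfl⟩
  left_inv B := Subtype.ext (eq_node_nil_nil_of_size_eq_one B.2.1).symm
  right_inv η := Subtype.ext (List.eq_nil_of_length_eq_zero η.2.1).symm

open BinTree in
theorem exists_withCanopy_equiv_pathsBelow (u : List Bool) :
    ∃ e : WithCanopy u ≃ PathsBelow u, ∀ B, B.1.leftBranchLen = contacts u (e B).1 + 1 ∧
      B.1.rightBranchLen = trailingNorth (e B).1 + 1 := by
  induction u using List.reverseRecOn with
  | nil =>
    refine ⟨withCanopyNilEquiv, fun B => ?_⟩
    rw [eq_node_nil_nil_of_size_eq_one B.2.1]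
    exact ⟨rfl, rfl⟩
  | append_singleton u x ih =>
    obtain ⟨e, he⟩ := ih
    cases x
    · have hdepth (p : WithCanopy u × ℕ) :
          p.2 < p.1.1.rightBranchLen ↔ p.2 ≤ trailingNorth (e p.1).1 := by
        rw [(he p.1).2, Nat.lt_succ_iff]
      refine ⟨(withCanopyAppendFalseEquiv u).symm.trans
        (((e.prodCongr (Equiv.refl ℕ)).subtypeEquiv hdepth).trans
          (pathsBelowAppendFalseEquiv u)), ?_⟩
      rw [(withCanopyAppendFalseEquiv u).surjective.forall]
      rintro ⟨⟨B, j⟩, hj⟩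
      have hmid : ((e.prodCongr (Equiv.refl ℕ)).subtypeEquiv hdepth ⟨(B, j), hj⟩ :
          {p : PathsBelow u × ℕ // p.2 ≤ trailingNorth p.1.1}).1 = (e B, j) := rfl
      simp only [Equiv.trans_apply, Equiv.symm_apply_apply, hmid,
        leftBranchLen_withCanopyAppendFalseEquiv, rightBranchLen_withCanopyAppendFalseEquiv,
        contacts_pathsBelowAppendFalseEquiv, trailingNorth_pathsBelowAppendFalseEquiv, (he B).1,
        and_true]
      omega
    · refine ⟨(withCanopyAppendTrueEquiv u).symm.trans
        (e.trans (pathsBelowAppendTrueEquiv u)), ?_⟩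
      rw [(withCanopyAppendTrueEquiv u).surjective.forall]
      intro B
      simp [he B]

theorem card_binTree_refined_eq_card_paths_refined_general
    (n : ℕ) (u : List Bool) (hu : u.length = n) (f g : ℕ) :
    Nat.card {B : BinTree //
        B.size = n + 1 ∧ B.canopy = u ∧
        B.leftBranchLen = f + 1 ∧ B.rightBranchLen = g + 1} =
      Nat.card {η : List Bool //
        weaklyBelow u η ∧ contacts u η = f ∧ trailingNorth η = g} := by
  subst hu
  obtain ⟨e, he⟩ := exists_withCanopy_equiv_pathsBelow u
  have hstat (B : BinTree.WithCanopy u) :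
      B.1.leftBranchLen = f + 1 ∧ B.1.rightBranchLen = g + 1 ↔
        contacts u (e B).1 = f ∧ trailingNorth (e B).1 = g := by
    simp [he B]
  calc Nat.card {B : BinTree // B.size = u.length + 1 ∧ B.canopy = u ∧
          B.leftBranchLen = f + 1 ∧ B.rightBranchLen = g + 1}
      = Nat.card {B : BinTree.WithCanopy u //
          B.1.leftBranchLen = f + 1 ∧ B.1.rightBranchLen = g + 1} :=
        Nat.card_congr <| (Equiv.subtypeEquivRight fun _ => and_assoc.symm).trans
          (Equiv.subtypeSubtypeEquivSubtypeInter _ _).symm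
    _ = Nat.card {η : PathsBelow u // contacts u η.1 = f ∧ trailingNorth η.1 = g} :=
        Nat.card_congr (e.subtypeEquiv hstat)
    _ = _ := Nat.card_congr (Equiv.subtypeSubtypeEquivSubtypeInter (weaklyBelow u)
        fun η => contacts u η = f ∧ trailingNorth η = g)

/-- For every integer `n ≥ 1`, every word `u` of length `n` over
`{a, b}`, and all integers `f ≥ 0` and `g ≥ 0`, the number of binary trees with
`n + 1` vertices with canopy `u` whose left branch has length `f + 1` and whose
right branch has length `g + 1` equals the number of lattice paths `η` weakly
below `ω_u` that have exactly `f` horizontal contacts with `ω_u` and exactly `g`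
trailing north steps. -/
theorem card_binTree_refined_eq_card_paths_refined
    (n : ℕ) (hn : 1 ≤ n) (u : List Bool) (hu : u.length = n) (f g : ℕ) :
    Nat.card {B : BinTree //
        B.size = n + 1 ∧ B.canopy = u ∧
        B.leftBranchLen = f + 1 ∧ B.rightBranchLen = g + 1} =
      Nat.card {η : List Bool //
        weaklyBelow u η ∧ contacts u η = f ∧ trailingNorth η = g} :=
  card_binTree_refined_eq_card_paths_refined_general n u hu f g
end

section
/- Let B be a nonempty binary tree and let m be the number of left edges of B (edges from a parent to its left child). Order the left edges as e_1, …, e_m so that their parent vertices are increasing in symmetric order, and let ρ_i be the right height of the parent of e_i. The vertices of B having no right child, excluding the last vertex in symmetric order, are exactly m in number; list them in symmetric order as g_1, …, g_m, and let h_i be the number of vertices of B that precede g_i in symmetric order and have a right child. Then ρ_i ≤ h_i for all 1 ≤ i ≤ m, and the sequence h_1 − ρ_1, h_2 − ρ_2, …, h_m − ρ_m is weakly increasing. -/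
/-!
Walk through the vertices in symmetric order, keeping count `c` of the vertices with a right
child seen so far. The successor of a vertex `v` is the leftmost vertex of its right subtree
if `v` has a right child (no left child, right height one more), and otherwise the nearest
ancestor whose left subtree contains `v` (a left child, right height no larger). So `c` minus
the right height never decreases along the traversal, and it starts at `0`. The vertices with a
left child are exactly the successors of the vertices without a right child other than the last
one, with the same `c`; hence `hᵢ - ρᵢ` is that quantity sampled at the `i`-th vertex having a
left child.
-/

def InorderStep (v w : Bool × Bool × ℕ) : Prop :=
  w.1 = !v.2.1 ∧ w.2.2 ≤ v.2.2 + v.2.1.toNat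

/-- The pairs `(hᵢ, ρᵢ)`, read at the vertices having a left child, when `c` vertices with a
right child precede the list. -/
def leftPairs : List (Bool × Bool × ℕ) → ℕ → List (ℕ × ℕ)
  | [], _ => []
  | v :: L, c => (if v.1 then [(c, v.2.2)] else []) ++ leftPairs L (c + v.2.1.toNat)

lemma map_snd_leftPairs : ∀ (L : List (Bool × Bool × ℕ)) (c : ℕ),
    (leftPairs L c).map Prod.snd = (L.filter (·.1)).map (·.2.2)
  | [], _ => rfl
  | v :: L, c => by
    cases hv : v.1 <;> simp [leftPairs, hv, map_snd_leftPairs L]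

lemma add_le_of_mem_leftPairs : ∀ {L : List (Bool × Bool × ℕ)} {c d : ℕ},
    L.IsChain InorderStep → (∀ v ∈ L.head?, v.2.2 + d ≤ c) → ∀ p ∈ leftPairs L c, p.2 + d ≤ p.1
  | [], _, _, _, _ => by simp [leftPairs]
  | v :: L, c, d, hL, hv => by
    rw [List.isChain_cons] at hL
    have hvc : v.2.2 + d ≤ c := hv v rfl
    have ih := add_le_of_mem_leftPairs (c := c + v.2.1.toNat) (d := d) hL.2 fun w hw => by
      have := (hL.1 w hw).2; omega
    intro p hp
    simp only [leftPairs, List.mem_append] at hp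
    rcases hp with hp | hp
    · split_ifs at hp <;> simp_all
    · exact ih p hp

lemma pairwise_leftPairs : ∀ {L : List (Bool × Bool × ℕ)} {c : ℕ},
    L.IsChain InorderStep → (∀ v ∈ L.head?, v.2.2 ≤ c) →
      (leftPairs L c).Pairwise (fun p q => p.1 - p.2 ≤ q.1 - q.2)
  | [], _, _, _ => by simp [leftPairs]
  | v :: L, c, hL, hv => by
    rw [List.isChain_cons] at hL
    have hvc : v.2.2 ≤ c := hv v rfl
    have hsucc : ∀ w ∈ L.head?, w.2.2 + (c - v.2.2) ≤ c + v.2.1.toNat := fun w hw => by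
      have := (hL.1 w hw).2; omega
    rw [leftPairs, List.pairwise_append]
    refine ⟨by split_ifs <;> simp, pairwise_leftPairs hL.2 fun w hw => by
      have := hsucc w hw; omega, ?_⟩
    intro a ha b hb
    split_ifs at ha
    · obtain rfl := List.mem_singleton.1 ha
      have := add_le_of_mem_leftPairs hL.2 hsucc b hb
      dsimp only; omega
    · simp at ha

lemma exists_hsAux_cons_eq_map_fst_append :
    ∀ {L : List (Bool × Bool × ℕ)} {v : Bool × Bool × ℕ} {c : ℕ},
    (v :: L).IsChain InorderStep → (∀ w ∈ (v :: L).getLast?, w.2.1 = false) →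
      ∃ n, hsAux (v :: L) c = (leftPairs L (c + v.2.1.toNat)).map Prod.fst ++ [n]
  | [], v, c, _, hlast => ⟨c, by simp [hsAux, leftPairs, hlast v rfl]⟩
  | w :: L, v, c, hL, hlast => by
    rw [List.isChain_cons_cons] at hL
    obtain ⟨n, hn⟩ := exists_hsAux_cons_eq_map_fst_append (c := c + v.2.1.toNat) hL.2
      fun u hu => hlast u (by simpa using hu)
    refine ⟨n, ?_⟩
    have hw : w.1 = !v.2.1 := hL.1.1
    cases hv : v.2.1 <;> simp_all [hsAux, leftPairs]

namespace BinTree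

lemma inorderAux_ne_nil {B : BinTree} (hB : B ≠ nil) (h : ℕ) : B.inorderAux h ≠ [] := by
  cases B with
  | nil => exact absurd rfl hB
  | node l r => simp [inorderAux]

lemma le_of_mem_inorderAux (B : BinTree) (h : ℕ) : ∀ v ∈ B.inorderAux h, h ≤ v.2.2 := by
  induction B generalizing h with
  | nil => simp [inorderAux]
  | node l r ihl ihr =>
    intro v hv
    simp only [inorderAux, List.mem_append, List.mem_cons] at hv
    rcases hv with hv | rfl | hv
    · exact ihl h v hv
    · exact le_rfl
    · exact (ihr (h + 1) v hv).trans' h.le_succ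

lemma head?_inorderAux (B : BinTree) (h : ℕ) :
    ∀ v ∈ (B.inorderAux h).head?, v.1 = false ∧ v.2.2 = h := by
  induction B generalizing h with
  | nil => simp [inorderAux]
  | node l r ihl _ =>
    intro v hv
    by_cases hl : l = nil
    · subst hl
      simp only [inorderAux, List.nil_append, List.head?_cons, Option.mem_def,
        Option.some.injEq] at hv
      simp [← hv]
    · rw [inorderAux, List.head?_append_of_ne_nil _ (inorderAux_ne_nil hl h)] at hv
      exact ihl h v hv

lemma getLast?_inorderAux (B : BinTree) (h : ℕ) :
    ∀ v ∈ (B.inorderAux h).getLast?, v.2.1 = false := by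
  induction B generalizing h with
  | nil => simp [inorderAux]
  | node l r _ ihr =>
    intro v hv
    by_cases hr : r = nil
    · subst hr
      simp only [inorderAux, List.getLast?_append_cons, List.getLast?_singleton,
        Option.mem_def, Option.some.injEq] at hv
      simp [← hv]
    · rw [inorderAux, List.getLast?_append_cons,
        List.getLast?_cons_of_ne_nil (inorderAux_ne_nil hr _)] at hv
      exact ihr (h + 1) v hv

lemma isChain_inorderAux (B : BinTree) (h : ℕ) : (B.inorderAux h).IsChain InorderStep := by
  induction B generalizing h with
  | nil => simp [inorderAux]
  | node l r ihl ihr =>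
    rw [inorderAux, List.isChain_append, List.isChain_cons]
    refine ⟨ihl h, ⟨fun w hw => ?_, ihr (h + 1)⟩, fun u hu w hw => ?_⟩
    · have hr : r ≠ nil := by rintro rfl; simp [inorderAux] at hw
      obtain ⟨hw1, hw2⟩ := head?_inorderAux r (h + 1) w hw
      simp [InorderStep, hw1, hw2, hr]
    · have hl : l ≠ nil := by rintro rfl; simp [inorderAux] at hu
      have hu1 := getLast?_inorderAux l h u hu
      have hu2 := le_of_mem_inorderAux l h u (List.mem_of_mem_getLast? hu)
      simp only [List.head?_cons, Option.mem_def, Option.some.injEq] at hw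
      simp [InorderStep, ← hw, hu1, hl, hu2]

lemma length_filter_inorderAux (B : BinTree) (h : ℕ) :
    ((B.inorderAux h).filter (·.1)).length = B.leftEdgeCount := by
  induction B generalizing h with
  | nil => simp [inorderAux, leftEdgeCount]
  | node l r ihl ihr =>
    by_cases hl : l = nil <;> simp [inorderAux, leftEdgeCount, hl, ihl, ihr]
    omega

lemma rhoList_eq_map_snd (B : BinTree) : B.rhoList = (leftPairs B.inorder 0).map Prod.snd :=
  (map_snd_leftPairs _ _).symm

lemma hList_eq_map_fst (B : BinTree) : B.hList = (leftPairs B.inorder 0).map Prod.fst := by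
  cases hI : B.inorder with
  | nil => simp [hList, hI, hsAux, leftPairs]
  | cons v L =>
    have hI' : B.inorderAux 0 = v :: L := hI
    obtain ⟨n, hn⟩ := exists_hsAux_cons_eq_map_fst_append (c := 0) (hI' ▸ B.isChain_inorderAux 0)
      fun w hw => B.getLast?_inorderAux 0 w (hI' ▸ hw)
    have hv : v.1 = false := (B.head?_inorderAux 0 v (by simp [hI'])).1
    rw [hList, hI, hn, List.dropLast_concat]
    simp [leftPairs, hv]

end BinTree

lemma getD_map_snd_le_getD_map_fst {P : List (ℕ × ℕ)} (hP : ∀ p ∈ P, p.2 ≤ p.1) (i : ℕ) :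
    (P.map Prod.snd).getD i 0 ≤ (P.map Prod.fst).getD i 0 := by
  rcases lt_or_ge i P.length with hi | hi
  · simpa [List.getD_eq_getElem, hi] using hP _ (List.getElem_mem hi)
  · simp [hi]

lemma getD_map_sub_le_of_pairwise {P : List (ℕ × ℕ)}
    (hP : P.Pairwise (fun p q => p.1 - p.2 ≤ q.1 - q.2)) {i j : ℕ} (hij : i ≤ j)
    (hj : j < P.length) :
    (P.map Prod.fst).getD i 0 - (P.map Prod.snd).getD i 0 ≤
      (P.map Prod.fst).getD j 0 - (P.map Prod.snd).getD j 0 := by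
  have hi : i < P.length := hij.trans_lt hj
  rw [List.getD_eq_getElem (P.map _) 0 (by simpa using hi),
    List.getD_eq_getElem (P.map _) 0 (by simpa using hi),
    List.getD_eq_getElem (P.map _) 0 (by simpa using hj),
    List.getD_eq_getElem (P.map _) 0 (by simpa using hj)]
  simp only [List.getElem_map]
  rcases hij.lt_or_eq with hij | rfl
  · exact List.pairwise_iff_getElem.1 hP i j (hij.trans hj) hj hij
  · exact le_rfl

theorem rho_le_h_and_monotone_general (B : BinTree) :
    B.rhoList.length = B.leftEdgeCount ∧
    B.hList.length = B.leftEdgeCount ∧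
    (∀ i, i < B.leftEdgeCount → B.rhoList.getD i 0 ≤ B.hList.getD i 0) ∧
    (∀ i j, i ≤ j → j < B.leftEdgeCount →
      B.hList.getD i 0 - B.rhoList.getD i 0 ≤ B.hList.getD j 0 - B.rhoList.getD j 0) := by
  have hchain := B.isChain_inorderAux 0
  have hroot : ∀ v ∈ B.inorder.head?, v.2.2 + 0 ≤ 0 := fun v hv => by
    simp [(B.head?_inorderAux 0 v hv).2]
  rw [B.rhoList_eq_map_snd, B.hList_eq_map_fst]
  have hlen : (leftPairs B.inorder 0).length = B.leftEdgeCount := by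
    rw [← List.length_map (f := Prod.snd), map_snd_leftPairs, List.length_map]
    exact B.length_filter_inorderAux 0
  refine ⟨by simp [hlen], by simp [hlen], fun i _ => ?_, fun i j hij hj => ?_⟩
  · exact getD_map_snd_le_getD_map_fst (add_le_of_mem_leftPairs hchain hroot) i
  · exact getD_map_sub_le_of_pairwise (pairwise_leftPairs hchain hroot) hij (hlen ▸ hj)

/-- Let `B` be a nonempty binary tree and `m` its number of left
edges.  Order the left edges so that their parent vertices are increasing in
symmetric order and let `ρᵢ` be the right height of the parent of the `i`-th
left edge.  The vertices of `B` having no right child, excluding the last vertex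
in symmetric order, are exactly `m` in number; let `hᵢ` be the number of
vertices of `B` preceding the `i`-th of them in symmetric order that have a
right child.  Then `ρᵢ ≤ hᵢ` for all `i`, and the sequence `hᵢ - ρᵢ` is weakly
increasing. -/
theorem rho_le_h_and_monotone (B : BinTree) (hB : B ≠ BinTree.nil) :
    B.rhoList.length = B.leftEdgeCount ∧
    B.hList.length = B.leftEdgeCount ∧
    (∀ i, i < B.leftEdgeCount → B.rhoList.getD i 0 ≤ B.hList.getD i 0) ∧
    (∀ i j, i ≤ j → j < B.leftEdgeCount →
      B.hList.getD i 0 - B.rhoList.getD i 0 ≤ B.hList.getD j 0 - B.rhoList.getD j 0) :=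
  rho_le_h_and_monotone_general B
end

section
/- For all integers n ≥ 1, 1 ≤ i ≤ n, and 0 ≤ j ≤ i, the number of binary trees with n+1 vertices whose left branch has length j+1 and whose right branch has length i−j+1 equals the ballot number (i/(2n−i))·binomial(2n−i, n); in particular this count does not depend on j. -/
/-! Cutting off the left and right branches of a tree whose branches have lengths `j + 1` and
`i - j + 1` leaves the `i` subtrees hanging from the non-root branch vertices: a forest of `i`
binary trees with `n - i` vertices in total, and every such forest arises exactly once.
Forests of `k` trees with `m` vertices satisfy the ballot recursion, since the first tree is
either empty or can be replaced by its two subtrees; its solution is `k/(2m+k) * C(2m+k, m)`. -/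

def ballotNumber : ℕ → ℕ → ℕ
  | 0, _ => 1
  | _ + 1, 0 => 0
  | m + 1, k + 1 => ballotNumber (m + 1) k + ballotNumber m (k + 2)
termination_by m k => (m, k)

theorem ballotNumber_mul_eq (m k : ℕ) :
    (2 * m + k) * ballotNumber m k = k * (2 * m + k).choose m := by
  induction m, k using ballotNumber.induct with
  | case1 k => simp [ballotNumber]
  | case2 m => simp [ballotNumber]
  | case3 m k ih₁ ih₂ =>
    have pascal := Nat.choose_succ_succ' (2 * m + k + 2) m
    have absorb := Nat.add_one_mul_choose_eq (2 * m + k + 2) m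
    refine Nat.eq_of_mul_eq_mul_left (show 0 < 2 * m + k + 2 by omega) ?_
    rw [ballotNumber, show 2 * (m + 1) + (k + 1) = 2 * m + k + 2 + 1 by ring]
    rw [show 2 * (m + 1) + k = 2 * m + k + 2 by ring] at ih₁
    rw [show 2 * m + (k + 2) = 2 * m + k + 2 by ring] at ih₂
    zify at *
    linear_combination (2 * m + k + 3 : ℤ) * ih₁ + (2 * m + k + 3) * ih₂
      + (2 * (m + 1) - (2 * m + k + 2) * (k + 1) : ℤ) * pascal + 2 * absorb

namespace BinTree

theorem size_eq_zero_iff {B : BinTree} : B.size = 0 ↔ B = nil := by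
  cases B <;> simp [size]

abbrev Forest (k m : ℕ) : Type :=
  {L : List BinTree // L.length = k ∧ (L.map size).sum = m}

namespace Forest

instance instUniqueZero (k : ℕ) : Unique (Forest k 0) where
  default := ⟨List.replicate k nil, by simp [size]⟩
  uniq := fun ⟨L, hlen, hsum⟩ => by
    have hnil : ∀ B ∈ L, B = nil := fun B hB =>
      size_eq_zero_iff.mp (List.sum_eq_zero_iff.mp hsum _ (List.mem_map_of_mem hB))
    exact Subtype.ext (List.eq_replicate_iff.mpr ⟨hlen, hnil⟩)

instance instIsEmptyZeroSucc (m : ℕ) : IsEmpty (Forest 0 (m + 1)) :=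
  ⟨fun ⟨L, hlen, hsum⟩ => by simp [List.length_eq_zero_iff.mp hlen] at hsum⟩

def splitHeadEquiv (k m : ℕ) :
    Forest (k + 1) (m + 1) ≃ Forest k (m + 1) ⊕ Forest (k + 2) m where
  toFun
    | ⟨nil :: L, h⟩ => .inl ⟨L, by simpa [size] using h⟩
    | ⟨node l r :: L, h⟩ => .inr ⟨l :: r :: L, by
        simp only [List.length_cons, List.map_cons, List.sum_cons, size] at h ⊢
        omega⟩
  invFun
    | .inl ⟨L, h⟩ => ⟨nil :: L, by simpa [size] using h⟩
    | .inr ⟨l :: r :: L, h⟩ => ⟨node l r :: L, by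
        simp only [List.length_cons, List.map_cons, List.sum_cons, size] at h ⊢
        omega⟩
  left_inv
    | ⟨nil :: _, _⟩ | ⟨node _ _ :: _, _⟩ => rfl
  right_inv
    | .inl _ | .inr ⟨_ :: _ :: _, _⟩ => rfl

end Forest

theorem enatCard_forest (m k : ℕ) : ENat.card (Forest k m) = ballotNumber m k := by
  induction m, k using ballotNumber.induct with
  | case1 k => simp [ballotNumber]
  | case2 m =>
    rw [ballotNumber, Nat.cast_zero, ENat.card_eq_zero_iff_empty]
    infer_instance
  | case3 m k ih₁ ih₂ =>
    rw [ENat.card_congr (Forest.splitHeadEquiv k m), ENat.card_sum, ih₁, ih₂, ballotNumber,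
      Nat.cast_add]

theorem natCard_forest (m k : ℕ) : Nat.card (Forest k m) = ballotNumber m k := by
  have : Finite (Forest k m) := ENat.card_lt_top.mp (by simp [enatCard_forest])
  exact_mod_cast (ENat.card_eq_coe_natCard _).symm.trans (enatCard_forest m k)

def leftComb : List BinTree → BinTree
  | [] => nil
  | r :: L => node (leftComb L) r

def rightComb : List BinTree → BinTree
  | [] => nil
  | l :: L => node l (rightComb L)

def leftBranchSubtrees : BinTree → List BinTree
  | nil => []
  | node l r => r :: leftBranchSubtrees l

def rightBranchSubtrees : BinTree → List BinTree
  | nil => []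
  | node l r => l :: rightBranchSubtrees r

@[simp]
theorem leftComb_leftBranchSubtrees (B : BinTree) : leftComb B.leftBranchSubtrees = B := by
  induction B with
  | nil => rfl
  | node l r ih _ => simp [leftBranchSubtrees, leftComb, ih]

@[simp]
theorem rightComb_rightBranchSubtrees (B : BinTree) : rightComb B.rightBranchSubtrees = B := by
  induction B with
  | nil => rfl
  | node l r _ ih => simp [rightBranchSubtrees, rightComb, ih]

@[simp]
theorem leftBranchSubtrees_leftComb (L : List BinTree) : (leftComb L).leftBranchSubtrees = L := by
  induction L with
  | nil => rfl
  | cons r L ih => simp [leftBranchSubtrees, leftComb, ih]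

@[simp]
theorem rightBranchSubtrees_rightComb (L : List BinTree) :
    (rightComb L).rightBranchSubtrees = L := by
  induction L with
  | nil => rfl
  | cons l L ih => simp [rightBranchSubtrees, rightComb, ih]

@[simp]
theorem leftBranchLen_leftComb (L : List BinTree) : (leftComb L).leftBranchLen = L.length := by
  induction L with
  | nil => rfl
  | cons r L ih => simp [leftBranchLen, leftComb, ih]

@[simp]
theorem rightBranchLen_rightComb (L : List BinTree) :
    (rightComb L).rightBranchLen = L.length := by
  induction L with
  | nil => rfl
  | cons l L ih => simp [rightBranchLen, rightComb, ih]

@[simp]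
theorem size_leftComb (L : List BinTree) : (leftComb L).size = (L.map size).sum + L.length := by
  induction L with
  | nil => rfl
  | cons r L ih =>
    simp only [leftComb, size, ih, List.map_cons, List.sum_cons, List.length_cons]
    omega

@[simp]
theorem size_rightComb (L : List BinTree) : (rightComb L).size = (L.map size).sum + L.length := by
  induction L with
  | nil => rfl
  | cons l L ih =>
    simp only [rightComb, size, ih, List.map_cons, List.sum_cons, List.length_cons]
    omega

theorem length_leftBranchSubtrees (B : BinTree) :
    B.leftBranchSubtrees.length = B.leftBranchLen := by
  rw [← leftBranchLen_leftComb, leftComb_leftBranchSubtrees]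

theorem length_rightBranchSubtrees (B : BinTree) :
    B.rightBranchSubtrees.length = B.rightBranchLen := by
  rw [← rightBranchLen_rightComb, rightComb_rightBranchSubtrees]

theorem sum_size_leftBranchSubtrees_add (B : BinTree) :
    (B.leftBranchSubtrees.map size).sum + B.leftBranchLen = B.size := by
  rw [← length_leftBranchSubtrees, ← size_leftComb, leftComb_leftBranchSubtrees]

theorem sum_size_rightBranchSubtrees_add (B : BinTree) :
    (B.rightBranchSubtrees.map size).sum + B.rightBranchLen = B.size := by
  rw [← length_rightBranchSubtrees, ← size_rightComb, rightComb_rightBranchSubtrees]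

def branchLenEquivForest (n i j : ℕ) (hin : i ≤ n) (hj : j ≤ i) :
    {B : BinTree // B.size = n + 1 ∧ B.leftBranchLen = j + 1 ∧ B.rightBranchLen = i - j + 1} ≃
      Forest i (n - i) where
  toFun
    | ⟨nil, h⟩ => nomatch h.2.1
    | ⟨node l r, h⟩ => ⟨l.leftBranchSubtrees ++ r.rightBranchSubtrees, by
        have := l.sum_size_leftBranchSubtrees_add
        have := r.sum_size_rightBranchSubtrees_add
        simp only [size, leftBranchLen, rightBranchLen] at h
        simp only [List.length_append, length_leftBranchSubtrees, length_rightBranchSubtrees,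
          List.map_append, List.sum_append]
        omega⟩
  invFun L := ⟨node (leftComb (L.1.take j)) (rightComb (L.1.drop j)), by
    obtain ⟨L, hlen, hsum⟩ := L
    rw [← L.take_append_drop j, List.map_append, List.sum_append] at hsum
    simp only [size, leftBranchLen, rightBranchLen, size_leftComb, size_rightComb,
      leftBranchLen_leftComb, rightBranchLen_rightComb, List.length_take, List.length_drop]
    omega⟩
  left_inv
    | ⟨nil, h⟩ => nomatch h.2.1
    | ⟨node l r, h⟩ => by
        have hl : l.leftBranchSubtrees.length = j := by
          rw [length_leftBranchSubtrees]
          simp only [leftBranchLen] at h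
          omega
        simp [← hl]
  right_inv L := Subtype.ext (by simp)

end BinTree

theorem card_binTree_branch_lengths_eq_ballot_general
    (n i j : ℕ) (hn : 1 ≤ n) (hin : i ≤ n) (hj : j ≤ i) :
    (Nat.card {B : BinTree //
        B.size = n + 1 ∧ B.leftBranchLen = j + 1 ∧ B.rightBranchLen = i - j + 1} : ℚ) =
      (i : ℚ) / ((2 * n - i : ℕ) : ℚ) * (((2 * n - i).choose n : ℕ) : ℚ) := by
  rw [Nat.card_congr (BinTree.branchLenEquivForest n i j hin hj), BinTree.natCard_forest]
  have hballot := ballotNumber_mul_eq (n - i) i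
  rw [show 2 * (n - i) + i = 2 * n - i by omega,
    Nat.choose_symm_of_eq_add (show 2 * n - i = n - i + n by omega)] at hballot
  have hpos : ((2 * n - i : ℕ) : ℚ) ≠ 0 := Nat.cast_ne_zero.mpr (by omega)
  rw [div_mul_eq_mul_div, eq_div_iff hpos]
  exact_mod_cast (mul_comm _ _).trans hballot

/-- For all integers `n ≥ 1`, `1 ≤ i ≤ n`, `0 ≤ j ≤ i`, the number
of binary trees with `n + 1` vertices whose left branch has length `j + 1` and
whose right branch has length `i - j + 1` equals the ballot number
`(i/(2n - i))·binomial(2n - i, n)`; in particular this count does not depend on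
`j`. -/
theorem card_binTree_branch_lengths_eq_ballot
    (n i j : ℕ) (hn : 1 ≤ n) (hi1 : 1 ≤ i) (hin : i ≤ n) (hj : j ≤ i) :
    (Nat.card {B : BinTree //
        B.size = n + 1 ∧ B.leftBranchLen = j + 1 ∧ B.rightBranchLen = i - j + 1} : ℚ) =
      (i : ℚ) / ((2 * n - i : ℕ) : ℚ) * (((2 * n - i).choose n : ℕ) : ℚ) :=
  card_binTree_branch_lengths_eq_ballot_general n i j hn hin hj
end

section
/- For every integer n ≥ 1 and all real numbers x, y (equivalently, as an identity of polynomials in x and y): the sum over all binary trees B with n+1 vertices of x^(ℓ(B)−1)·y^(r(B)−1), where ℓ(B) and r(B) denote the lengths of the left and right branches of B, equals the sum over i from 1 to n of (i/(2n−i))·binomial(2n−i, n) times (x^i + x^(i−1)y + x^(i−2)y^2 + … + y^i), i.e. ∑_B x^(ℓ(B)−1) y^(r(B)−1) = ∑_{i=1}^{n} (i/(2n−i))·C(2n−i, n)·∑_{j=0}^{i} x^j y^(i−j). -/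
/-!
Let `T` be the Catalan series, the generating function of binary trees by size. Cutting a tree at
its root shows that the series `L_z` of trees weighted by `z ^ (length of the left branch)`
satisfies `L_z = 1 + z X T L_z`, i.e. `L_z = 1 / (1 - z X T)`; the same holds for right branches.
A tree with `n + 1` vertices is a root with two subtrees, so the sum in question is the coefficient
of `X ^ n` in `L_x L_y = ∑ᵢ hᵢ(x, y) (X T) ^ i`, where `hᵢ` is the complete homogeneous polynomial of
degree `i`. Finally `[X ^ s] T ^ k` is the ballot number `k / (2 s + k) * C(2 s + k, s)`, by induction
on `s` and `k` from `T ^ (k + 1) = T ^ k + X T ^ (k + 2)`.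
-/

open Finset PowerSeries

namespace BinTree

def treesOfSize : ℕ → Finset BinTree
  | 0 => {nil}
  | p + 1 => (antidiagonal p).attach.biUnion fun uv =>
      (treesOfSize uv.1.1 ×ˢ treesOfSize uv.1.2).image fun lr => node lr.1 lr.2
  decreasing_by
    · have := mem_antidiagonal.1 uv.2; omega
    · have := mem_antidiagonal.1 uv.2; omega

@[simp]
theorem mem_treesOfSize {B : BinTree} {p : ℕ} : B ∈ treesOfSize p ↔ B.size = p := by
  induction B generalizing p with
  | nil => cases p <;> simp [treesOfSize, size]
  | node l r ihl ihr =>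
    cases p with
    | zero => simp [treesOfSize, size]
    | succ p => simp [treesOfSize, size, ihl, ihr]

theorem sum_treesOfSize_succ {M : Type*} [AddCommMonoid M] (f : BinTree → M) (p : ℕ) :
    ∑ B ∈ treesOfSize (p + 1), f B =
      ∑ uv ∈ antidiagonal p, ∑ l ∈ treesOfSize uv.1, ∑ r ∈ treesOfSize uv.2, f (node l r) := by
  rw [treesOfSize, sum_biUnion, ← sum_attach (antidiagonal p)]
  · refine sum_congr rfl fun uv _ => ?_
    rw [sum_image (by simp), sum_product]
  · intro uv _ uv' _ hne
    simp only [Function.onFun, disjoint_left, mem_image, mem_product, mem_treesOfSize]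
    rintro _ ⟨⟨l, r⟩, ⟨hl, hr⟩, rfl⟩ ⟨⟨l', r'⟩, ⟨hl', hr'⟩, h⟩
    simp only [node.injEq] at h
    obtain ⟨rfl, rfl⟩ := h
    exact hne (Subtype.ext (Prod.ext (hl.symm.trans hl') (hr.symm.trans hr')))

theorem card_treesOfSize (p : ℕ) : #(treesOfSize p) = catalan p := by
  induction p using Nat.strong_induction_on with
  | _ p ih =>
    cases p with
    | zero => simp [treesOfSize]
    | succ p =>
      rw [card_eq_sum_ones, sum_treesOfSize_succ, catalan_succ']
      refine sum_congr rfl fun uv huv => ?_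
      simp only [sum_const, smul_eq_mul, mul_one]
      rw [ih _ (by have := mem_antidiagonal.1 huv; omega),
        ih _ (by have := mem_antidiagonal.1 huv; omega)]

section Semiring

variable {R : Type*} [CommSemiring R]

def treeSeries (f : BinTree → R) : R⟦X⟧ := mk fun p => ∑ B ∈ treesOfSize p, f B

theorem coeff_succ_treeSeries {f g h : BinTree → R} {c : R}
    (hf : ∀ l r, f (node l r) = c * (g l * h r)) (p : ℕ) :
    coeff (p + 1) (treeSeries f) = c * coeff p (treeSeries g * treeSeries h) := by
  rw [treeSeries, coeff_mk, sum_treesOfSize_succ, coeff_mul, mul_sum]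
  refine sum_congr rfl fun uv _ => ?_
  rw [treeSeries, treeSeries, coeff_mk, coeff_mk, sum_mul_sum, mul_sum]
  simp only [hf, mul_sum]

theorem treeSeries_eq_of_node {f g h : BinTree → R} {c : R}
    (hf : ∀ l r, f (node l r) = c * (g l * h r)) :
    treeSeries f = C (f nil) + C c * X * (treeSeries g * treeSeries h) := by
  ext (_ | p)
  · simp [treeSeries, treesOfSize]
  · rw [coeff_succ_treeSeries hf, mul_assoc, mul_comm X, ← mul_assoc, map_add, coeff_succ_mul_X,
      coeff_C_mul]
    simp

theorem treeSeries_one :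
    treeSeries (fun _ => (1 : R)) = map (Nat.castRingHom R) catalanSeries := by
  ext p
  simp [treeSeries, card_treesOfSize]

theorem sum_treesOfSize_succ_pow_branchLen (x y : R) (p : ℕ) :
    ∑ B ∈ treesOfSize (p + 1), x ^ (B.leftBranchLen - 1) * y ^ (B.rightBranchLen - 1) =
      coeff p (treeSeries (x ^ ·.leftBranchLen) * treeSeries (y ^ ·.rightBranchLen)) := by
  rw [← one_mul (coeff p _), ← coeff_succ_treeSeries
    (f := fun B => x ^ (B.leftBranchLen - 1) * y ^ (B.rightBranchLen - 1))
    fun l r => by simp [leftBranchLen, rightBranchLen], treeSeries, coeff_mk]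

end Semiring

end BinTree

namespace PowerSeries

theorem catalanSeries_pow_succ (k : ℕ) :
    catalanSeries ^ (k + 1) = catalanSeries ^ k + X * catalanSeries ^ (k + 2) := by
  rw [pow_succ]
  nth_rewrite 2 [← catalanSeries_sq_mul_X_add_one]
  ring

theorem coeff_succ_catalanSeries_pow_succ (t k : ℕ) :
    coeff (t + 1) (catalanSeries ^ (k + 1)) =
      coeff (t + 1) (catalanSeries ^ k) + coeff t (catalanSeries ^ (k + 2)) := by
  rw [catalanSeries_pow_succ, map_add, coeff_succ_X_mul]

theorem coeff_succ_catalanSeries_pow (s k : ℕ) :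
    ((coeff (s + 1) (catalanSeries ^ k) : ℕ) : ℤ) =
      (2 * s + k + 1).choose (s + 1) - (2 * s + k + 1).choose s := by
  induction s generalizing k with
  | zero =>
    induction k with
    | zero => simp [coeff_one]
    | succ k ih =>
      rw [coeff_succ_catalanSeries_pow_succ, Nat.cast_add, ih]
      simp [Nat.choose_one_right]
  | succ s ihs =>
    induction k with
    | zero =>
      rw [pow_zero, coeff_one, if_neg (by omega), Nat.cast_zero, add_zero,
        Nat.choose_symm_half, sub_self]
    | succ k ihk =>
      rw [coeff_succ_catalanSeries_pow_succ, Nat.cast_add, ihk, ihs]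
      have h₁ := (2 * s + k + 3).choose_succ_succ' (s + 1)
      have h₂ := (2 * s + k + 3).choose_succ_succ' s
      rw [show 2 * (s + 1) + (k + 1) + 1 = 2 * s + k + 3 + 1 by ring,
        show 2 * (s + 1) + k + 1 = 2 * s + k + 3 by ring,
        show 2 * s + (k + 2) + 1 = 2 * s + k + 3 by ring, h₁, h₂]
      push_cast
      ring

theorem coeff_catalanSeries_pow_mul (s k : ℕ) :
    coeff s (catalanSeries ^ k) * (2 * s + k) = k * (2 * s + k).choose s := by
  cases s with
  | zero => simp
  | succ s =>
    have h₁ := Nat.choose_mul_succ_eq (2 * s + k + 1) (s + 1)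
    have h₂ := Nat.add_one_mul_choose_eq (2 * s + k + 1) s
    rw [show 2 * s + k + 1 + 1 - (s + 1) = s + k + 1 by omega] at h₁
    rw [show 2 * (s + 1) + k = 2 * s + k + 1 + 1 by ring]
    zify at h₁ h₂ ⊢
    rw [coeff_succ_catalanSeries_pow]
    linear_combination h₁ - h₂

theorem coeff_sub_catalanSeries_pow {K : Type*} [Field K] [CharZero K] {n i : ℕ}
    (h1 : 1 ≤ i) (h2 : i ≤ n) :
    ((coeff (n - i) (catalanSeries ^ i) : ℕ) : K) =
      i / (2 * n - i : ℕ) * ((2 * n - i).choose n : ℕ) := by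
  have h := coeff_catalanSeries_pow_mul (n - i) i
  rw [show 2 * (n - i) + i = 2 * n - i by omega,
    Nat.choose_symm_of_eq_add (show 2 * n - i = n - i + n by omega)] at h
  have hpos : ((2 * n - i : ℕ) : K) ≠ 0 := by norm_cast; omega
  rw [div_mul_eq_mul_div, eq_div_iff hpos]
  exact_mod_cast h

variable {R : Type*} [CommRing R]

theorem one_sub_C_mul_X_mul_mk_pow (z : R) : (1 - C z * X) * mk (z ^ ·) = 1 := by
  ext (_ | n)
  · simp
  · simp [sub_mul, mul_assoc, coeff_succ_X_mul, pow_succ']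

theorem eq_subst_mk_pow_of_eq {U P : R⟦X⟧} (hU : constantCoeff U = 0) {z : R}
    (hP : P = 1 + C z * U * P) : P = subst U (mk (z ^ ·)) := by
  have hsubst : HasSubst U := HasSubst.of_constantCoeff_zero' hU
  have hunit : IsUnit (1 - C z * U) := by simp [isUnit_iff_constantCoeff, hU]
  refine hunit.mul_left_cancel ?_
  have := congrArg (substAlgHom hsubst) (one_sub_C_mul_X_mul_mk_pow z)
  rw [← algebraMap_eq, map_mul, map_sub, map_one, map_mul, AlgHom.commutes, substAlgHom_X,
    algebraMap_eq, coe_substAlgHom] at this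
  rw [this]
  linear_combination hP

theorem coeff_mk_pow_mul_mk_pow (x y : R) (d : ℕ) :
    coeff d (mk (x ^ ·) * mk (y ^ ·)) = ∑ j ∈ range (d + 1), x ^ j * y ^ (d - j) := by
  rw [coeff_mul, Nat.sum_antidiagonal_eq_sum_range_succ_mk]
  simp

theorem coeff_X_mul_pow (T : R⟦X⟧) (n d : ℕ) :
    coeff n ((X * T) ^ d) = if d ≤ n then coeff (n - d) (T ^ d) else 0 := by
  rw [mul_pow, coeff_X_pow_mul']

theorem coeff_subst_X_mul_mk_pow_mul (T : R⟦X⟧) (x y : R) {n : ℕ} (hn : n ≠ 0) :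
    coeff n (subst (X * T) (mk (x ^ ·)) * subst (X * T) (mk (y ^ ·))) =
      ∑ i ∈ Icc 1 n, coeff (n - i) (T ^ i) * ∑ j ∈ range (i + 1), x ^ j * y ^ (i - j) := by
  have hsubst : HasSubst (X * T) := HasSubst.of_constantCoeff_zero' (by simp)
  rw [← subst_mul hsubst, coeff_subst' hsubst, finsum_eq_sum_of_support_subset (s := Icc 1 n)]
  · refine sum_congr rfl fun i hi => ?_
    rw [coeff_mk_pow_mul_mk_pow, coeff_X_mul_pow, if_pos (mem_Icc.1 hi).2, smul_eq_mul, mul_comm]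
  · intro d hd
    rw [Function.mem_support, coeff_X_mul_pow] at hd
    rw [coe_Icc, Set.mem_Icc]
    split_ifs at hd with hdn
    · refine ⟨Nat.one_le_iff_ne_zero.2 fun hd0 => hd ?_, hdn⟩
      simp [hd0, coeff_one, hn]
    · simp at hd

end PowerSeries

namespace BinTree

variable {R : Type*} [CommRing R]

theorem treeSeries_pow_leftBranchLen (z : R) :
    treeSeries (z ^ ·.leftBranchLen) =
      subst (X * map (Nat.castRingHom R) catalanSeries) (mk (z ^ ·)) := by
  refine eq_subst_mk_pow_of_eq (by simp) ?_
  refine (treeSeries_eq_of_node (g := (z ^ ·.leftBranchLen)) (h := fun _ => 1) (c := z)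
    fun l r => by simp [leftBranchLen, pow_succ']).trans ?_
  rw [treeSeries_one]
  simp [leftBranchLen]
  ring

theorem treeSeries_pow_rightBranchLen (z : R) :
    treeSeries (z ^ ·.rightBranchLen) =
      subst (X * map (Nat.castRingHom R) catalanSeries) (mk (z ^ ·)) := by
  refine eq_subst_mk_pow_of_eq (by simp) ?_
  refine (treeSeries_eq_of_node (g := fun _ => 1) (h := (z ^ ·.rightBranchLen)) (c := z)
    fun l r => by simp [rightBranchLen, pow_succ']).trans ?_
  rw [treeSeries_one]
  simp [rightBranchLen]
  ring

end BinTree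

/-- For every integer `n ≥ 1` and all real numbers `x`, `y`:
`∑_B x^(ℓ(B) - 1) y^(r(B) - 1) = ∑_{i=1}^{n} (i/(2n - i))·C(2n - i, n)·∑_{j=0}^{i} x^j y^(i - j)`,
where the left-hand sum ranges over all binary trees `B` with `n + 1` vertices
and `ℓ(B)`, `r(B)` are the lengths of the left and right branches of `B`. -/
theorem sum_binTree_branch_weights (n : ℕ) (hn : 1 ≤ n) (x y : ℝ) :
    (∑ᶠ B ∈ {B : BinTree | B.size = n + 1},
        x ^ (B.leftBranchLen - 1) * y ^ (B.rightBranchLen - 1)) =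
      ∑ i ∈ Finset.Icc 1 n,
        (i : ℝ) / ((2 * n - i : ℕ) : ℝ) * (((2 * n - i).choose n : ℕ) : ℝ) *
          ∑ j ∈ Finset.range (i + 1), x ^ j * y ^ (i - j) := by
  have hset : {B : BinTree | B.size = n + 1} = ↑(BinTree.treesOfSize (n + 1)) := by ext; simp
  rw [hset, finsum_mem_coe_finset, BinTree.sum_treesOfSize_succ_pow_branchLen,
    BinTree.treeSeries_pow_leftBranchLen, BinTree.treeSeries_pow_rightBranchLen,
    coeff_subst_X_mul_mk_pow_mul _ _ _ (by omega)]
  refine sum_congr rfl fun i hi => ?_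
  rw [← map_pow, coeff_map, Nat.coe_castRingHom,
    coeff_sub_catalanSeries_pow (mem_Icc.1 hi).1 (mem_Icc.1 hi).2]
end

section
/- For every integer n ≥ 1, ∑_{i=1}^{n} (i+1)·(i/(2n−i))·binomial(2n−i, n) = C_{n+1}, where C_{n+1} = (1/(n+2))·binomial(2n+2, n+1) is the (n+1)-st Catalan number. -/
/-!
Gosper's algorithm produces a hypergeometric antidifference of the summand: with
`P(i) = (n + 1) i² + (3n + 1) i + 2(2n + 1)` and `F(i) = P(i) C(2n - i, n) / ((n + 1)(n + 2))`,
the `i`-th term is `F(i) - F(i + 1)`; after `C(2n - i - 1, n) = C(2n - i, n) (n - i) / (2n - i)`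
this is a polynomial identity in `i` and `n`. The sum telescopes to `F(1) - F(n + 1)`, where
`F(n + 1) = 0` because `C(n - 1, n) = 0`, and `F(1) = C(2n + 2, n + 1) / (n + 2)` by the recursion
for central binomial coefficients.
-/

def ballotAntidiff (n i : ℕ) : ℚ :=
  ((n + 1) * i ^ 2 + (3 * n + 1) * i + 2 * (2 * n + 1) : ℚ) * ((2 * n - i).choose n : ℕ) /
    ((n + 1) * (n + 2))

theorem Nat.centralBinom_succ_eq_two_mul_choose (m : ℕ) :
    (m + 1).centralBinom = 2 * (2 * m + 1).choose (m + 1) := by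
  rw [Nat.centralBinom, show 2 * (m + 1) = 2 * m + 1 + 1 by ring, Nat.choose_succ_succ',
    Nat.choose_symm_half]
  ring

theorem Nat.choose_two_mul_sub_succ_mul {n i : ℕ} (hi : i < 2 * n) :
    (2 * n - (i + 1)).choose n * (2 * n - i) = (2 * n - i).choose n * (n - i) := by
  have h := Nat.choose_mul_succ_eq (2 * n - (i + 1)) n
  rwa [show 2 * n - (i + 1) + 1 = 2 * n - i by omega, show 2 * n - i - n = n - i by omega] at h

theorem ballot_summand_eq_sub {n i : ℕ} (hi : 0 < i) (hin : i ≤ n) :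
    ((i : ℚ) + 1) * ((i : ℚ) / ((2 * n - i : ℕ) : ℚ)) * (((2 * n - i).choose n : ℕ) : ℚ) =
      ballotAntidiff n i - ballotAntidiff n (i + 1) := by
  have hden : ((2 * n - i : ℕ) : ℚ) = 2 * n - i := by push_cast [show i ≤ 2 * n by omega]; ring
  have hden_ne : (2 * n - i : ℚ) ≠ 0 := by
    rw [← hden]; exact_mod_cast (show 2 * n - i ≠ 0 by omega)
  have hchoose : (((2 * n - (i + 1)).choose n : ℕ) : ℚ) =
      ((2 * n - i).choose n : ℕ) * (n - i) / (2 * n - i) := by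
    rw [eq_div_iff hden_ne, ← hden, ← Nat.cast_sub hin]
    exact_mod_cast Nat.choose_two_mul_sub_succ_mul (by omega)
  rw [ballotAntidiff, ballotAntidiff, hden, hchoose]
  push_cast
  field_simp
  ring

theorem ballotAntidiff_succ_self {n : ℕ} (hn : 0 < n) : ballotAntidiff n (n + 1) = 0 := by
  simp [ballotAntidiff, Nat.choose_eq_zero_of_lt (show 2 * n - (n + 1) < n by omega)]

theorem ballotAntidiff_one {n : ℕ} (hn : 0 < n) :
    ballotAntidiff n 1 = (((2 * n + 2).choose (n + 1) : ℕ) : ℚ) / ((n : ℚ) + 2) := by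
  obtain ⟨m, rfl⟩ : ∃ m, n = m + 1 := ⟨n - 1, by omega⟩
  have hsucc : ((m + 2).centralBinom : ℚ) =
      2 * (2 * m + 3) * (m + 1).centralBinom / (m + 2) := by
    rw [eq_div_iff (by positivity)]
    have h := congrArg (Nat.cast : ℕ → ℚ) (Nat.succ_mul_centralBinom_succ (m + 1))
    push_cast at h
    linear_combination h
  have hhalf : ((m + 1).centralBinom : ℚ) = 2 * (2 * m + 1).choose (m + 1) := by
    exact_mod_cast Nat.centralBinom_succ_eq_two_mul_choose m
  rw [ballotAntidiff, show 2 * (m + 1) - 1 = 2 * m + 1 by omega,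
    show 2 * (m + 1) + 2 = 2 * (m + 2) by ring, ← Nat.centralBinom_eq_two_mul_choose, hsucc, hhalf]
  push_cast
  field_simp
  ring

/-- For every integer `n ≥ 1`,
`∑_{i=1}^{n} (i + 1)·(i/(2n - i))·binomial(2n - i, n) = C_{n+1}`, where
`C_{n+1} = (1/(n + 2))·binomial(2n + 2, n + 1)` is the `(n+1)`-st Catalan
number. -/
theorem sum_ballot_eq_catalan (n : ℕ) (hn : 1 ≤ n) :
    (∑ i ∈ Finset.Icc 1 n,
        ((i : ℚ) + 1) * ((i : ℚ) / ((2 * n - i : ℕ) : ℚ)) *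
          (((2 * n - i).choose n : ℕ) : ℚ)) =
      (((2 * n + 2).choose (n + 1) : ℕ) : ℚ) / ((n : ℚ) + 2) := by
  calc _ = ∑ i ∈ Finset.Icc 1 n, -(ballotAntidiff n (i + 1) - ballotAntidiff n i) := by
        refine Finset.sum_congr rfl fun i hi => ?_
        obtain ⟨hi, hin⟩ := Finset.mem_Icc.1 hi
        rw [ballot_summand_eq_sub hi hin, neg_sub]
    _ = ballotAntidiff n 1 - ballotAntidiff n (n + 1) := by
        rw [Finset.sum_neg_distrib, Finset.sum_Icc_sub hn, neg_sub]
    _ = _ := by rw [ballotAntidiff_one hn, ballotAntidiff_succ_self hn, sub_zero]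
end
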